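/- Let L > 0 and β > 0. Let u : [0,L]² → ℝ be of class C² and satisfy u(L,y) = 0 for all y ∈ [0,L], and u_y(x,0) = 0 and u_y(x,L) = β u_x(x,L) for all x ∈ [0,L]. Then ∫_Ω x · u(x,y) · (∂ₓ⁻¹ u_yy)(x,y) dx dy = β ∫₀^L x · u(x,L)² dx + ½ ∫_Ω ((∂ₓ⁻¹ u_y)(x,y))² dx dy. -/

import Mathlib

open MeasureTheory Real

noncomputable section

/-- Partial derivative in `x` of `u(x,y)`. -/
def pdx (u : ℝ → ℝ → ℝ) (x y : ℝ) : ℝ := deriv (fun x' => u x' y) x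

/-- Third partial derivative in `x` of `u(x,y)`. -/
def pdx3 (u : ℝ → ℝ → ℝ) (x y : ℝ) : ℝ := iteratedDeriv 3 (fun x' => u x' y) x

/-- Partial derivative in `y` of `u(x,y)`. -/
def pdy (u : ℝ → ℝ → ℝ) (x y : ℝ) : ℝ := deriv (fun y' => u x y') y

/-- Second partial derivative in `y` of `u(x,y)`. -/
def pdy2 (u : ℝ → ℝ → ℝ) (x y : ℝ) : ℝ := iteratedDeriv 2 (fun y' => u x y') y

/-- The nonlocal operator `(∂ₓ⁻¹ w)(x,y) = -∫ₓ^L w(s,y) ds`. -/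
def pxInv (L : ℝ) (w : ℝ → ℝ → ℝ) (x y : ℝ) : ℝ := -(∫ s in x..L, w s y)

/-- The adjoint nonlocal operator `((∂ₓ⁻¹)* w)(x,y) = ∫₀^x w(s,y) ds`. -/
def pxInvStar (w : ℝ → ℝ → ℝ) (x y : ℝ) : ℝ := ∫ s in (0:ℝ)..x, w s y

/-!
Write `B = ∂ₓ⁻¹ u_y`. Then `∂ₓ B = u_y` and `B(L, y) = 0`, and differentiating under the integral
sign gives `∂_y B = ∂ₓ⁻¹ u_yy`. The boundary conditions give `B(x, 0) = 0` and
`B(x, L) = -β ∫ₓ^L u_x(s, L) ds = β u(x, L)`, so integrating by parts in `y`,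
`∫₀^L u ∂ₓ⁻¹u_yy dy = β u(x, L)² - ∫₀^L u_y B dy`. The remaining term is `x u_y B = x ∂ₓ(B²/2)`,
whose integral over `x ∈ [0, L]` is `-½ ∫₀^L B² dx` because `B(L, y) = 0`.
-/

open Set Function intervalIntegral

section PartialDerivatives

variable {u : ℝ → ℝ → ℝ}

lemma hasDerivAt_slice_fst {x y : ℝ} (hu : DifferentiableAt ℝ (uncurry u) (x, y)) :
    HasDerivAt (fun x' => u x' y) (fderiv ℝ (uncurry u) (x, y) (1, 0)) x := by
  have hline : HasDerivAt (fun x' : ℝ => (x', y)) ((1 : ℝ), (0 : ℝ)) x :=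
    (hasDerivAt_id x).prodMk (hasDerivAt_const x y)
  exact hu.hasFDerivAt.comp_hasDerivAt x hline

lemma hasDerivAt_slice_snd {x y : ℝ} (hu : DifferentiableAt ℝ (uncurry u) (x, y)) :
    HasDerivAt (u x) (fderiv ℝ (uncurry u) (x, y) (0, 1)) y := by
  have hline : HasDerivAt (fun y' : ℝ => (x, y')) ((0 : ℝ), (1 : ℝ)) y :=
    (hasDerivAt_const y x).prodMk (hasDerivAt_id y)
  exact hu.hasFDerivAt.comp_hasDerivAt y hline

lemma hasDerivAt_pdx {x y : ℝ} (hu : DifferentiableAt ℝ (uncurry u) (x, y)) :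
    HasDerivAt (fun x' => u x' y) (pdx u x y) x :=
  (hasDerivAt_slice_fst hu).differentiableAt.hasDerivAt

lemma hasDerivAt_pdy {x y : ℝ} (hu : DifferentiableAt ℝ (uncurry u) (x, y)) :
    HasDerivAt (u x) (pdy u x y) y :=
  (hasDerivAt_slice_snd hu).differentiableAt.hasDerivAt

lemma uncurry_pdx_eq_fderiv (hu : Differentiable ℝ (uncurry u)) :
    uncurry (pdx u) = fun p => fderiv ℝ (uncurry u) p (1, 0) :=
  funext fun p => (hasDerivAt_slice_fst (hu p)).deriv

lemma uncurry_pdy_eq_fderiv (hu : Differentiable ℝ (uncurry u)) :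
    uncurry (pdy u) = fun p => fderiv ℝ (uncurry u) p (0, 1) :=
  funext fun p => (hasDerivAt_slice_snd (hu p)).deriv

lemma contDiff_pdx {n : WithTop ℕ∞} (hu : ContDiff ℝ (n + 1) (uncurry u)) :
    ContDiff ℝ n (uncurry (pdx u)) := by
  rw [uncurry_pdx_eq_fderiv (hu.differentiable (by simp))]
  exact (hu.fderiv_right le_rfl).clm_apply contDiff_const

lemma contDiff_pdy {n : WithTop ℕ∞} (hu : ContDiff ℝ (n + 1) (uncurry u)) :
    ContDiff ℝ n (uncurry (pdy u)) := by
  rw [uncurry_pdy_eq_fderiv (hu.differentiable (by simp))]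
  exact (hu.fderiv_right le_rfl).clm_apply contDiff_const

lemma pdy2_eq_pdy_pdy : pdy2 u = pdy (pdy u) := by
  funext x y
  rw [pdy2, iteratedDeriv_succ, iteratedDeriv_one]
  rfl

lemma integral_pdx (hu : ContDiff ℝ 1 (uncurry u)) (a b y : ℝ) :
    ∫ s in a..b, pdx u s y = u b y - u a y := by
  have hu' : Differentiable ℝ (uncurry u) := hu.differentiable one_ne_zero
  have hcont : Continuous (uncurry (pdx u)) := (contDiff_pdx (n := 0) hu).continuous
  refine integral_eq_sub_of_hasDerivAt (f := fun s => u s y) (fun s _ => ?_) ?_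
  · exact hasDerivAt_pdx (hu' (s, y))
  · exact (hcont.uncurry_right y).intervalIntegrable a b

end PartialDerivatives

lemma intervalIntegral_swap_of_continuous {F : ℝ → ℝ → ℝ} (hF : Continuous (uncurry F))
    (a b c d : ℝ) :
    ∫ x in a..b, ∫ y in c..d, F x y = ∫ y in c..d, ∫ x in a..b, F x y :=
  intervalIntegral_intervalIntegral_swap <|
    (hF.continuousOn.integrableOn_compact (isCompact_uIcc.prod isCompact_uIcc)).mono_set
      (prod_mono uIoc_subset_uIcc uIoc_subset_uIcc)

lemma hasDerivAt_intervalIntegral_param {w w' : ℝ → ℝ → ℝ} (hw : Continuous (uncurry w))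
    (hw' : Continuous (uncurry w')) (hderiv : ∀ s t, HasDerivAt (w s) (w' s t) t)
    (a b y : ℝ) :
    HasDerivAt (fun t => ∫ s in a..b, w s t) (∫ s in a..b, w' s y) y := by
  have hw'_int : Continuous fun t => ∫ s in a..b, w' s t :=
    continuous_parametric_intervalIntegral_of_continuous' (f := fun t s => w' s t)
      (hw'.comp continuous_swap) a b
  have hprimitive : ∀ t, ∫ s in a..b, w s t
      = (∫ s in a..b, w s 0) + ∫ τ in (0 : ℝ)..t, ∫ s in a..b, w' s τ := by
    intro t
    have hftc : ∀ s, w s t - w s 0 = ∫ τ in (0 : ℝ)..t, w' s τ := fun s =>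
      (integral_eq_sub_of_hasDerivAt (fun τ _ => hderiv s τ)
        ((hw'.uncurry_left s).intervalIntegrable 0 t)).symm
    rw [← intervalIntegral_swap_of_continuous hw', ← sub_eq_iff_eq_add',
      ← integral_sub ((hw.uncurry_right t).intervalIntegrable a b)
        ((hw.uncurry_right 0).intervalIntegrable a b)]
    simp only [hftc]
  rw [show (fun t => ∫ s in a..b, w s t) = _ from funext hprimitive]
  exact ((hw'_int.integral_hasStrictDerivAt 0 y).hasDerivAt).const_add _

lemma integral_id_mul_deriv_mul_self {f f' : ℝ → ℝ} {b : ℝ} (hf : ∀ x, HasDerivAt f (f' x) x)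
    (hf' : Continuous f') (hb : f b = 0) :
    ∫ x in (0 : ℝ)..b, x * f' x * f x = -(1 / 2) * ∫ x in (0 : ℝ)..b, f x ^ 2 := by
  have hfc : Continuous f := continuous_iff_continuousAt.2 fun x => (hf x).continuousAt
  have hderiv : ∀ x, HasDerivAt (fun x => x * f x ^ 2 / 2) (f x ^ 2 / 2 + x * f' x * f x) x :=
    fun x => (((hasDerivAt_id' x).mul ((hf x).pow 2)).div_const 2).congr_deriv (by
      norm_num
      ring)
  have hsq : Continuous fun x => f x ^ 2 / 2 := by fun_prop
  have hcross : Continuous fun x => x * f' x * f x := by fun_prop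
  have hftc := integral_eq_sub_of_hasDerivAt (fun x _ => hderiv x)
    ((hsq.add hcross).intervalIntegrable 0 b)
  rw [integral_add (hsq.intervalIntegrable 0 b) (hcross.intervalIntegrable 0 b),
    intervalIntegral.integral_div, hb] at hftc
  linarith

section NonlocalOperator

variable {w : ℝ → ℝ → ℝ}

lemma pxInv_self (L y : ℝ) : pxInv L w L y = 0 := by
  simp [pxInv]

lemma continuous_pxInv (hw : Continuous (uncurry w)) (L : ℝ) :
    Continuous (uncurry (pxInv L w)) := by
  have hprim : uncurry (pxInv L w) = fun p : ℝ × ℝ => ∫ s in L..p.1, w s p.2 :=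
    funext fun p => (integral_symm p.1 L).symm
  rw [hprim]
  exact continuous_parametric_intervalIntegral_of_continuous (μ := volume)
    (f := fun (p : ℝ × ℝ) s => w s p.2) (s := Prod.fst)
    (hw.comp (continuous_snd.prodMk (continuous_snd.comp continuous_fst))) continuous_fst

lemma hasDerivAt_pxInv_fst {L y : ℝ} (hw : Continuous fun s => w s y) (x : ℝ) :
    HasDerivAt (fun x' => pxInv L w x' y) (w x y) x := by
  have hprim : (fun x' => pxInv L w x' y) = fun x' => ∫ s in L..x', w s y :=
    funext fun x' => (integral_symm x' L).symm
  rw [hprim]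
  exact (hw.integral_hasStrictDerivAt L x).hasDerivAt

lemma hasDerivAt_pxInv_snd {w' : ℝ → ℝ → ℝ} (hw : Continuous (uncurry w))
    (hw' : Continuous (uncurry w')) (hderiv : ∀ s t, HasDerivAt (w s) (w' s t) t) (L x y : ℝ) :
    HasDerivAt (pxInv L w x) (pxInv L w' x y) y :=
  (hasDerivAt_intervalIntegral_param hw hw' hderiv x L y).neg

lemma integral_id_mul_integral_mul_pxInv (hw : Continuous (uncurry w)) (L c d : ℝ) :
    ∫ x in (0 : ℝ)..L, x * ∫ y in c..d, w x y * pxInv L w x y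
      = -(1 / 2) * ∫ x in (0 : ℝ)..L, ∫ y in c..d, pxInv L w x y ^ 2 := by
  have hB := continuous_pxInv hw L
  have hintegrand : Continuous (uncurry fun x y => x * w x y * pxInv L w x y) :=
    (continuous_fst.mul hw).mul hB
  have hsq : Continuous (uncurry fun x y => pxInv L w x y ^ 2) := hB.pow 2
  calc ∫ x in (0 : ℝ)..L, x * ∫ y in c..d, w x y * pxInv L w x y
      = ∫ x in (0 : ℝ)..L, ∫ y in c..d, x * w x y * pxInv L w x y := by
        simp only [← intervalIntegral.integral_const_mul, mul_assoc]
    _ = ∫ y in c..d, ∫ x in (0 : ℝ)..L, x * w x y * pxInv L w x y :=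
        intervalIntegral_swap_of_continuous hintegrand 0 L c d
    _ = ∫ y in c..d, -(1 / 2) * ∫ x in (0 : ℝ)..L, pxInv L w x y ^ 2 :=
        integral_congr fun y _ => integral_id_mul_deriv_mul_self
          (hasDerivAt_pxInv_fst (hw.uncurry_right y)) (hw.uncurry_right y) (pxInv_self L y)
    _ = -(1 / 2) * ∫ x in (0 : ℝ)..L, ∫ y in c..d, pxInv L w x y ^ 2 := by
        rw [intervalIntegral.integral_const_mul, intervalIntegral_swap_of_continuous hsq]

end NonlocalOperator

lemma integral_mul_pxInv_pdy2 {u : ℝ → ℝ → ℝ} (hu : ContDiff ℝ 2 (uncurry u)) (L x a b : ℝ) :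
    ∫ y in a..b, u x y * pxInv L (pdy2 u) x y
      = u x b * pxInv L (pdy u) x b - u x a * pxInv L (pdy u) x a
        - ∫ y in a..b, pdy u x y * pxInv L (pdy u) x y := by
  have hu' : ContDiff ℝ 1 (uncurry (pdy u)) := contDiff_pdy hu
  have hw : Continuous (uncurry (pdy u)) := hu'.continuous
  have hw' : Continuous (uncurry (pdy2 u)) :=
    pdy2_eq_pdy_pdy (u := u) ▸ (contDiff_pdy (n := 0) hu').continuous
  have hderiv : ∀ s t, HasDerivAt (pdy u s) (pdy2 u s t) t := fun s t =>
    pdy2_eq_pdy_pdy (u := u) ▸ hasDerivAt_pdy (hu'.differentiable one_ne_zero (s, t))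
  exact integral_mul_deriv_eq_deriv_mul_of_hasDerivAt
    (hu.continuous.uncurry_left x).continuousOn
    ((continuous_pxInv hw L).uncurry_left x).continuousOn
    (fun y _ => hasDerivAt_pdy (hu.differentiable two_ne_zero (x, y)))
    (fun y _ => hasDerivAt_pxInv_snd hw hw' hderiv L x y)
    ((hw.uncurry_left x).intervalIntegrable a b)
    (((continuous_pxInv hw' L).uncurry_left x).intervalIntegrable a b)

theorem kp_morawetz_nonlocal_general (L β : ℝ) (hL : 0 < L)
    (u : ℝ → ℝ → ℝ) (hu : ContDiff ℝ 2 (fun p : ℝ × ℝ => u p.1 p.2))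
    (hbx : ∀ y ∈ Set.Icc (0:ℝ) L, u L y = 0)
    (hby : ∀ x ∈ Set.Icc (0:ℝ) L, pdy u x 0 = 0 ∧ pdy u x L = β * pdx u x L) :
    (∫ x in (0:ℝ)..L, ∫ y in (0:ℝ)..L, x * u x y * pxInv L (pdy2 u) x y)
      = β * (∫ x in (0:ℝ)..L, x * (u x L)^2)
        + (1/2) * (∫ x in (0:ℝ)..L, ∫ y in (0:ℝ)..L, (pxInv L (pdy u) x y)^2) := by
  have hw : Continuous (uncurry (pdy u)) := (contDiff_pdy (n := 1) hu).continuous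
  have hL_mem : L ∈ Icc 0 L := right_mem_Icc.2 hL.le
  have hB_bottom : ∀ x ∈ Icc 0 L, pxInv L (pdy u) x 0 = 0 := fun x hx => by
    rw [pxInv, integral_congr (g := fun _ => 0)
      fun s hs => (hby s (uIcc_subset_Icc hx hL_mem hs)).1]
    simp
  have hB_top : ∀ x ∈ Icc 0 L, pxInv L (pdy u) x L = β * u x L := fun x hx => by
    rw [pxInv, integral_congr (g := fun s => β * pdx u s L)
      fun s hs => (hby s (uIcc_subset_Icc hx hL_mem hs)).2, intervalIntegral.integral_const_mul,
      integral_pdx (hu.of_le one_le_two), hbx L hL_mem]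
    ring
  have hinner : ∀ x ∈ uIcc 0 L, ∫ y in (0:ℝ)..L, x * u x y * pxInv L (pdy2 u) x y
      = β * (x * u x L ^ 2) - x * ∫ y in (0:ℝ)..L, pdy u x y * pxInv L (pdy u) x y := by
    intro x hx
    rw [uIcc_of_le hL.le] at hx
    simp only [mul_assoc, intervalIntegral.integral_const_mul, integral_mul_pxInv_pdy2 hu,
      hB_bottom x hx, hB_top x hx]
    ring
  have hcross : Continuous fun x => x * ∫ y in (0:ℝ)..L, pdy u x y * pxInv L (pdy u) x y :=
    continuous_id.mul (continuous_parametric_intervalIntegral_of_continuous'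
      (hw.mul (continuous_pxInv hw L)) 0 L)
  have hboundary : Continuous fun x => β * (x * u x L ^ 2) :=
    continuous_const.mul (continuous_id.mul ((hu.continuous.uncurry_right L).pow 2))
  rw [integral_congr hinner, integral_sub (hboundary.intervalIntegrable 0 L)
    (hcross.intervalIntegrable 0 L), intervalIntegral.integral_const_mul,
    integral_id_mul_integral_mul_pxInv hw]
  ring

/-- Morawetz multiplier identity for the nonlocal term under the closed-loop boundary
conditions in `y`:
`∫_Ω x u (∂ₓ⁻¹ u_yy) dx dy = β ∫₀^L x u(x,L)² dx + ½ ∫_Ω ((∂ₓ⁻¹ u_y))² dx dy`. -/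
theorem kp_morawetz_nonlocal (L β : ℝ) (hL : 0 < L) (hβ : 0 < β)
    (u : ℝ → ℝ → ℝ) (hu : ContDiff ℝ 2 (fun p : ℝ × ℝ => u p.1 p.2))
    (hbx : ∀ y ∈ Set.Icc (0:ℝ) L, u L y = 0)
    (hby : ∀ x ∈ Set.Icc (0:ℝ) L, pdy u x 0 = 0 ∧ pdy u x L = β * pdx u x L) :
    (∫ x in (0:ℝ)..L, ∫ y in (0:ℝ)..L, x * u x y * pxInv L (pdy2 u) x y)
      = β * (∫ x in (0:ℝ)..L, x * (u x L)^2)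
        + (1/2) * (∫ x in (0:ℝ)..L, ∫ y in (0:ℝ)..L, (pxInv L (pdy u) x y)^2) :=
  kp_morawetz_nonlocal_general L β hL u hu hbx hby

end
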